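/- arXiv:2305.19123 — 2 statements merged into one kernel-verified Lean document; each statement's English description precedes it below -/
import Mathlib

section
/- Let g(x,y,r) = (r/π)·(1 − Σ_i ω_i 1{y=i})·E_t[h(X)|Y=k] + ((r/π)·Σ_i ω_i 1{y=i} − (1−r)/(1−π))·h(x), where h is any measurable function with E_t[h(X)] = 0. Then E[g(X,Y,R)] = 0 under the pooled distribution. -/
open MeasureTheory

/-! Under label shift both halves of the pooled sample see the same class conditionals `μ j`.
Since `ps j * ω j = pt j`, for each label `j` the `h`-term of the source half,
`π • ps j • (ω j / π) • E_j[h]`, is exactly cancelled by the target half,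
`(1 - π) • pt j • (-1 / (1 - π)) • E_j[h]`, leaving `(ps j - pt j) • c`; these sum
to zero because `ps` and `pt` are both probability vectors. -/

theorem integral_const_add_smul {X E : Type*} [MeasurableSpace X] [NormedAddCommGroup E]
    [NormedSpace ℝ E] [CompleteSpace E] {μ : Measure X} [IsProbabilityMeasure μ] {f : X → E}
    (hf : Integrable f μ) (v : E) (a : ℝ) :
    ∫ x, v + a • f x ∂μ = v + a • ∫ x, f x ∂μ := by
  have haf : Integrable (fun x => a • f x) μ := hf.smul a
  rw [integral_add (integrable_const v) haf, integral_const, probReal_univ, one_smul,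
    integral_smul]

theorem pooled_label_contribution {E : Type*} [AddCommGroup E] [Module ℝ E]
    {π ps pt : ℝ} (hπ0 : π ≠ 0) (hπ1 : 1 - π ≠ 0) (hps : ps ≠ 0) (c m : E) :
    π • (ps • ((1 / π * (1 - pt / ps)) • c + (1 / π * (pt / ps)) • m))
      + (1 - π) • (pt • (-(1 / (1 - π))) • m) = (ps - pt) • c := by
  match_scalars
  · field_simp
  · field_simp
    ring

/-- Let
`g(x,y,r) = (r/π)(1 − ∑_i ω_i 1{y=i})·E_t[h(X)|Y=k] + ((r/π) ∑_i ω_i 1{y=i} − (1−r)/(1−π))·h(x)`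
with `E_t[h(X)] = 0`.  Then `E[g(X,Y,R)] = 0` under the pooled distribution, where
`P(R=1)=π`, `(X,Y)|R=1 ∼ p_s`, `(X,Y)|R=0 ∼ p_t`, with common conditionals `μ_j = p(x|y=j)`. -/
theorem elsa_stmt4 {k : ℕ} {X : Type*} [MeasurableSpace X]
    (μ : Fin k → Measure X) [∀ j, IsProbabilityMeasure (μ j)]  -- common p(x|y=j)
    (ps pt : Fin k → ℝ) (hps : ∀ j, 0 < ps j)
    (hps1 : ∑ j, ps j = 1) (hpt1 : ∑ j, pt j = 1)
    (π : ℝ) (hπ : π ∈ Set.Ioo (0:ℝ) 1)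
    (ω : Fin k → ℝ) (hω : ∀ j, ω j = pt j / ps j)
    (h : X → EuclideanSpace ℝ (Fin (k-1)))
    (hint : ∀ j, Integrable h (μ j))
    (c : EuclideanSpace ℝ (Fin (k-1))) :
    -- pooled expectation of g: the R=1 part plus the R=0 part
    π • (∑ j, ps j • ∫ x,
          ((1/π) * (1 - ω j)) • c + ((1/π) * ω j - 0) • h x ∂(μ j))
      + (1 - π) • (∑ j, pt j • ∫ x,
          ((0:ℝ)) • c + (0 - 1/(1-π)) • h x ∂(μ j)) = 0 := by
  obtain ⟨hπ0, hπ1⟩ := hπ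
  simp only [sub_zero, zero_smul, zero_add, zero_sub, integral_const_add_smul (hint _),
    integral_smul, Finset.smul_sum, ← Finset.sum_add_distrib]
  calc ∑ j, (π • (ps j • ((1 / π * (1 - ω j)) • c + (1 / π * ω j) • ∫ x, h x ∂μ j))
          + (1 - π) • (pt j • (-(1 / (1 - π))) • ∫ x, h x ∂μ j))
      _ = ∑ j, (ps j - pt j) • c := Finset.sum_congr rfl fun j _ => by
        rw [hω j]
        exact pooled_label_contribution hπ0.ne' (sub_ne_zero.mpr hπ1.ne') (hps j).ne' _ _
      _ = 0 := by
        rw [← Finset.sum_smul, Finset.sum_sub_distrib, hps1, hpt1, sub_self, zero_smul]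
end

section
/- For the function space Λ^⊥ = { g(x,y,r) = (r/π)(1 − Σ_i ω_i 1{y=i})·E_t[h|Y=k] + ((r/π)Σ_i ω_i 1{y=i} − (1−r)/(1−π))·h(x) : E_t[h] = 0 }, every element g ∈ Λ^⊥ is orthogonal (in L²) to the nuisance tangent space Λ_π = { (r/π − (1−r)/(1−π))·a : a ∈ R^{k−1} }, i.e., E[g(X,Y,R)·(R/π − (1−R)/(1−π))] = 0 componentwise. -/
/-!
Integrating out `X` turns each half of the pooled expectation into a finite sum over labels.
Under label shift `E_s[ω(Y) v(Y)] = E_t[v(Y)]`, so the source half (`R = 1`) becomes a multiple of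
`(1 - E_s[ω]) c + E_t[h]` and the target half (`R = 0`) a multiple of `E_t[h]`; both vanish.
-/

open MeasureTheory

section
variable {X E : Type*} [MeasurableSpace X] [NormedAddCommGroup E] [NormedSpace ℝ E]
  [CompleteSpace E]

theorem integral_smul_const_add_smul (μ : Measure X) [IsProbabilityMeasure μ] {f : X → E}
    (hf : Integrable f μ) (s a b : ℝ) (c : E) :
    ∫ x, s • (a • c + b • f x) ∂μ = s • (a • c + b • ∫ x, f x ∂μ) := by
  have hbf : Integrable (fun x => b • f x) μ := hf.smul b
  rw [integral_smul, integral_add (integrable_const (a • c)) hbf, integral_const, integral_smul,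
    probReal_univ, one_smul]

end

theorem sum_smul_importance_weight {ι E : Type*} [Fintype ι] [AddCommGroup E] [Module ℝ E]
    {ps pt ω : ι → ℝ} (hps : ∀ j, 0 < ps j) (hω : ∀ j, ω j = pt j / ps j) (v : ι → E) :
    ∑ j, (ps j * ω j) • v j = ∑ j, pt j • v j := by
  congr! 2 with j
  rw [hω, mul_div_cancel₀ _ (hps j).ne']

/-- Every element
`g(x,y,r) = (r/π)(1 − ∑_i ω_i 1{y=i})·E_t[h|Y=k] + ((r/π)∑_i ω_i 1{y=i} − (1−r)/(1−π))·h(x)`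
of `Λ^⊥` (with `E_t[h]=0`) is L²-orthogonal to the nuisance tangent space
`Λ_π = {(r/π − (1−r)/(1−π))·a}`, i.e. `E[g(X,Y,R)·(R/π − (1−R)/(1−π))] = 0`
componentwise under the pooled distribution. -/
theorem elsa_stmt11 {k : ℕ} {X : Type*} [MeasurableSpace X]
    (μ : Fin k → Measure X) [∀ j, IsProbabilityMeasure (μ j)]  -- common p(x|y=j)
    (ps pt : Fin k → ℝ) (hps : ∀ j, 0 < ps j)
    (hps1 : ∑ j, ps j = 1)
    (π : ℝ)
    (ω : Fin k → ℝ) (hω : ∀ j, ω j = pt j / ps j)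
    (hωps : ∑ j, ω j * ps j = 1)
    (h : X → EuclideanSpace ℝ (Fin (k-1)))
    (hint : ∀ j, Integrable h (μ j))
    (hEt : ∑ j, pt j • (∫ x, h x ∂(μ j)) = 0)   -- E_t[h(X)] = 0
    (c : EuclideanSpace ℝ (Fin (k-1))) :
    -- E[(R/π − (1−R)/(1−π)) • g(X,Y,R)] = 0 :
    π • (∑ j, ps j • ∫ x,
          (1/π) • (((1/π) * (1 - ω j)) • c + ((1/π) * ω j - 0) • h x) ∂(μ j))
      + (1 - π) • (∑ j, pt j • ∫ x,
          (-(1/(1-π))) • (((0:ℝ)) • c + (0 - 1/(1-π)) • h x) ∂(μ j)) = 0 := by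
  simp_rw [integral_smul_const_add_smul _ (hint _)]
  have hsource : ∀ j,
      ps j • (1/π) • (((1/π) * (1 - ω j)) • c + ((1/π) * ω j - 0) • ∫ x, h x ∂μ j)
        = (π⁻¹ * π⁻¹) • ((ps j - ω j * ps j) • c + (ps j * ω j) • ∫ x, h x ∂μ j) :=
    fun j => by module
  have htarget : ∀ j, pt j • (-(1/(1-π))) • ((0:ℝ) • c + (0 - 1/(1-π)) • ∫ x, h x ∂μ j)
      = ((1 - π)⁻¹ * (1 - π)⁻¹) • pt j • ∫ x, h x ∂μ j :=
    fun j => by module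
  simp_rw [hsource, htarget, ← Finset.smul_sum, Finset.sum_add_distrib, ← Finset.sum_smul]
  simp only [Finset.sum_sub_distrib, hps1, hωps, sum_smul_importance_weight hps hω, hEt, sub_self,
    zero_smul, smul_zero, add_zero]
end
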